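/- Let n ≥ 1, let A be a symmetric n×n real matrix, ω a skew-symmetric n×n real matrix, d, N ∈ ℝⁿ, and let μ₁, μ₂, μ₃, μ₅, μ₆ be real numbers with λ₁ := μ₂ − μ₃ ≠ 0. Set λ₂ := μ₅ − μ₆, ρ := λ₁N + λ₂(Ad), and σ := μ₁(dᵀAd)(d⊗d) + μ₂(N⊗d) + μ₃(d⊗N) + μ₅((Ad)⊗d) + μ₆(d⊗(Ad)). Then the total dissipation satisfies the exact identity ⟨σ, A+ω⟩_F − ⟨ωd, ρ⟩ + (λ₂/λ₁)⟨Ad, ρ⟩ − (1/λ₁)|ρ|² = −λ₁|N|² − (λ₂ − μ₂ − μ₃)⟨N, Ad⟩ + (μ₅+μ₆)|Ad|² + μ₁(dᵀAd)². -/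

import Mathlib

/-!
Split the pairing `⟨σ, A + ω⟩_F` into its symmetric and skew parts. Pairing `σ` with the symmetric
`A` gives `μ₁ (dᵀAd)² + (μ₂ + μ₃)⟨N, Ad⟩ + (μ₅ + μ₆)|Ad|²`. Pairing it with the skew `ω` gives exactly
`⟨ωd, ρ⟩`, since skewness turns `⟨d, ωx⟩` into `-⟨x, ωd⟩` and kills `⟨d, ωd⟩`; so the two `ω`-terms
cancel. What is left, `(λ₂/λ₁)⟨Ad, ρ⟩ - |ρ|²/λ₁`, collapses to `-λ₁|N|² - λ₂⟨N, Ad⟩` once `ρ` is expanded.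
-/

open Matrix

namespace Matrix

variable {ι R : Type*} [Fintype ι]

theorem sum_sum_vecMulVec_mul [CommSemiring R] (a b : ι → R) (M : Matrix ι ι R) :
    ∑ i, ∑ j, vecMulVec a b i j * M i j = a ⬝ᵥ M *ᵥ b := by
  simp only [vecMulVec_apply, dotProduct, mulVec, Finset.mul_sum]
  refine Finset.sum_congr rfl fun i _ => Finset.sum_congr rfl fun j _ => ?_
  ring

theorem dotProduct_mulVec_comm_of_transpose_eq [CommSemiring R] {M : Matrix ι ι R}
    (hM : Mᵀ = M) (x y : ι → R) : x ⬝ᵥ M *ᵥ y = y ⬝ᵥ M *ᵥ x := by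
  rw [dotProduct_mulVec, dotProduct_comm, ← mulVec_transpose, hM]

theorem dotProduct_mulVec_eq_neg_of_transpose_eq_neg [CommRing R] {M : Matrix ι ι R}
    (hM : Mᵀ = -M) (x y : ι → R) : x ⬝ᵥ M *ᵥ y = -(y ⬝ᵥ M *ᵥ x) := by
  rw [dotProduct_mulVec, dotProduct_comm, ← mulVec_transpose, hM, neg_mulVec, dotProduct_neg]

theorem dotProduct_mulVec_self_eq_zero_of_transpose_eq_neg [CommRing R] [IsAddTorsionFree R]
    {M : Matrix ι ι R} (hM : Mᵀ = -M) (x : ι → R) : x ⬝ᵥ M *ᵥ x = 0 :=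
  self_eq_neg.mp (dotProduct_mulVec_eq_neg_of_transpose_eq_neg hM x x)

end Matrix

section EricksenLeslie

variable {ι R : Type*} [Fintype ι]

def leslieStress [CommRing R] (μ₁ μ₂ μ₃ μ₅ μ₆ : R) (A : Matrix ι ι R) (d N : ι → R) :
    Matrix ι ι R :=
  (μ₁ * (d ⬝ᵥ A.mulVec d)) • vecMulVec d d + μ₂ • vecMulVec N d
    + μ₃ • vecMulVec d N + μ₅ • vecMulVec (A.mulVec d) d
    + μ₆ • vecMulVec d (A.mulVec d)

theorem sum_sum_leslieStress_mul_apply [CommRing R] (μ₁ μ₂ μ₃ μ₅ μ₆ : R)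
    (A M : Matrix ι ι R) (d N : ι → R) :
    ∑ i, ∑ j, leslieStress μ₁ μ₂ μ₃ μ₅ μ₆ A d N i j * M i j
      = μ₁ * (d ⬝ᵥ A *ᵥ d) * (d ⬝ᵥ M *ᵥ d) + μ₂ * (N ⬝ᵥ M *ᵥ d) + μ₃ * (d ⬝ᵥ M *ᵥ N)
        + μ₅ * (A *ᵥ d ⬝ᵥ M *ᵥ d) + μ₆ * (d ⬝ᵥ M *ᵥ (A *ᵥ d)) := by
  simp only [leslieStress, Matrix.add_apply, Matrix.smul_apply, smul_eq_mul, add_mul, mul_assoc,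
    Finset.sum_add_distrib, ← Finset.mul_sum, sum_sum_vecMulVec_mul]

theorem sum_sum_leslieStress_mul_of_transpose_eq [CommRing R] (μ₁ μ₂ μ₃ μ₅ μ₆ : R)
    {A : Matrix ι ι R} (hA : Aᵀ = A) (d N : ι → R) :
    ∑ i, ∑ j, leslieStress μ₁ μ₂ μ₃ μ₅ μ₆ A d N i j * A i j
      = μ₁ * (d ⬝ᵥ A *ᵥ d) ^ 2 + (μ₂ + μ₃) * (N ⬝ᵥ A *ᵥ d)
        + (μ₅ + μ₆) * (A *ᵥ d ⬝ᵥ A *ᵥ d) := by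
  rw [sum_sum_leslieStress_mul_apply, dotProduct_mulVec_comm_of_transpose_eq hA d N,
    dotProduct_mulVec_comm_of_transpose_eq hA d (A *ᵥ d)]
  ring

theorem sum_sum_leslieStress_mul_of_transpose_eq_neg [CommRing R] [IsAddTorsionFree R]
    (μ₁ μ₂ μ₃ μ₅ μ₆ : R) (A : Matrix ι ι R) {ω : Matrix ι ι R} (hω : ωᵀ = -ω) (d N : ι → R) :
    ∑ i, ∑ j, leslieStress μ₁ μ₂ μ₃ μ₅ μ₆ A d N i j * ω i j
      = ω *ᵥ d ⬝ᵥ ((μ₂ - μ₃) • N + (μ₅ - μ₆) • A *ᵥ d) := by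
  rw [sum_sum_leslieStress_mul_apply, dotProduct_mulVec_self_eq_zero_of_transpose_eq_neg hω,
    dotProduct_mulVec_eq_neg_of_transpose_eq_neg hω d N,
    dotProduct_mulVec_eq_neg_of_transpose_eq_neg hω d (A *ᵥ d)]
  rw [dotProduct_comm (ω *ᵥ d)]
  simp only [add_dotProduct, smul_dotProduct, smul_eq_mul]
  ring

end EricksenLeslie

theorem div_mul_dotProduct_sub_one_div_mul_dotProduct_self {ι K : Type*} [Fintype ι] [Field K]
    {a : K} (ha : a ≠ 0) (b : K) (u v : ι → K) :
    b / a * (v ⬝ᵥ (a • u + b • v)) - 1 / a * ((a • u + b • v) ⬝ᵥ (a • u + b • v))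
      = -a * (u ⬝ᵥ u) - b * (u ⬝ᵥ v) := by
  simp only [dotProduct_add, add_dotProduct, dotProduct_smul, smul_dotProduct, smul_eq_mul,
    dotProduct_comm v u]
  field_simp
  ring

theorem leslie_dissipation_no_parodi_general
    (n : ℕ)
    (A ω : Matrix (Fin n) (Fin n) ℝ)
    (hA : Aᵀ = A) (hω : ωᵀ = -ω)
    (d N : Fin n → ℝ) (μ₁ μ₂ μ₃ μ₅ μ₆ lam₁ lam₂ : ℝ)
    (hlam₁ : lam₁ = μ₂ - μ₃) (hlam₂ : lam₂ = μ₅ - μ₆) (hlam₁ne : lam₁ ≠ 0) :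
    (∑ i, ∑ j,
      ((μ₁ * (d ⬝ᵥ A.mulVec d)) • vecMulVec d d + μ₂ • vecMulVec N d
        + μ₃ • vecMulVec d N + μ₅ • vecMulVec (A.mulVec d) d
        + μ₆ • vecMulVec d (A.mulVec d)) i j * (A + ω) i j)
      - ω.mulVec d ⬝ᵥ (lam₁ • N + lam₂ • A.mulVec d)
      + (lam₂ / lam₁) * (A.mulVec d ⬝ᵥ (lam₁ • N + lam₂ • A.mulVec d))
      - (1 / lam₁) * ((lam₁ • N + lam₂ • A.mulVec d) ⬝ᵥ (lam₁ • N + lam₂ • A.mulVec d))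
      = -lam₁ * (N ⬝ᵥ N) - (lam₂ - μ₂ - μ₃) * (N ⬝ᵥ A.mulVec d)
        + (μ₅ + μ₆) * (A.mulVec d ⬝ᵥ A.mulVec d)
        + μ₁ * (d ⬝ᵥ A.mulVec d) ^ 2 := by
  have hsplit : ∑ i, ∑ j, leslieStress μ₁ μ₂ μ₃ μ₅ μ₆ A d N i j * (A + ω) i j
      = ∑ i, ∑ j, leslieStress μ₁ μ₂ μ₃ μ₅ μ₆ A d N i j * A i j
        + ∑ i, ∑ j, leslieStress μ₁ μ₂ μ₃ μ₅ μ₆ A d N i j * ω i j := by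
    simp only [Matrix.add_apply, mul_add, Finset.sum_add_distrib]
  have hskew := sum_sum_leslieStress_mul_of_transpose_eq_neg μ₁ μ₂ μ₃ μ₅ μ₆ A hω d N
  rw [← hlam₁, ← hlam₂] at hskew
  change ∑ i, ∑ j, leslieStress μ₁ μ₂ μ₃ μ₅ μ₆ A d N i j * (A + ω) i j - _ + _ - _ = _
  rw [hsplit, sum_sum_leslieStress_mul_of_transpose_eq μ₁ μ₂ μ₃ μ₅ μ₆ hA d N, hskew]
  linear_combination div_mul_dotProduct_sub_one_div_mul_dotProduct_self hlam₁ne lam₂ N (A *ᵥ d)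

/-- Pointwise basis for the energy inequality (en-case2) in Case 2 (without
Parodi's relation) of the regularized Ericksen–Leslie system: exact form of
the total dissipation. -/
theorem leslie_dissipation_no_parodi
    (n : ℕ) (hn : 1 ≤ n)
    (A ω : Matrix (Fin n) (Fin n) ℝ)
    (hA : Aᵀ = A) (hω : ωᵀ = -ω)
    (d N : Fin n → ℝ) (μ₁ μ₂ μ₃ μ₅ μ₆ lam₁ lam₂ : ℝ)
    (hlam₁ : lam₁ = μ₂ - μ₃) (hlam₂ : lam₂ = μ₅ - μ₆) (hlam₁ne : lam₁ ≠ 0) :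
    (∑ i, ∑ j,
      ((μ₁ * (d ⬝ᵥ A.mulVec d)) • vecMulVec d d + μ₂ • vecMulVec N d
        + μ₃ • vecMulVec d N + μ₅ • vecMulVec (A.mulVec d) d
        + μ₆ • vecMulVec d (A.mulVec d)) i j * (A + ω) i j)
      - ω.mulVec d ⬝ᵥ (lam₁ • N + lam₂ • A.mulVec d)
      + (lam₂ / lam₁) * (A.mulVec d ⬝ᵥ (lam₁ • N + lam₂ • A.mulVec d))
      - (1 / lam₁) * ((lam₁ • N + lam₂ • A.mulVec d) ⬝ᵥ (lam₁ • N + lam₂ • A.mulVec d))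
      = -lam₁ * (N ⬝ᵥ N) - (lam₂ - μ₂ - μ₃) * (N ⬝ᵥ A.mulVec d)
        + (μ₅ + μ₆) * (A.mulVec d ⬝ᵥ A.mulVec d)
        + μ₁ * (d ⬝ᵥ A.mulVec d) ^ 2 :=
  leslie_dissipation_no_parodi_general n A ω hA hω d N μ₁ μ₂ μ₃ μ₅ μ₆ lam₁ lam₂ hlam₁ hlam₂ hlam₁ne
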